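/- arXiv:1805.09500 — 4 statements merged into one kernel-verified Lean document; each statement's English description precedes it below -/
import Mathlib

section
/- Let $\mathcal{V}$ be the space of sequences $f = (f^{(r)})_{r \ge 1}$ of rational functions $f^{(r)} \in \mathbb{Q}(x_1,\ldots,x_r)$ satisfying $f^{(r)}(x_1,\ldots,x_r) + (-1)^r f^{(r)}(x_r,\ldots,x_1) = 0$ for all $r$. Then $\mathcal{V}$ is closed under the ari bracket: if $f, g \in \mathcal{V}$ then $\{f,g\}_{\mathrm{ari}} \in \mathcal{V}$. -/
open Finset

/-- A mould (sequence of "rational functions", modelled as arbitrary functions):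
the depth-`r` component is a function of `r` variables `x₁, …, x_r`. -/
abbrev Mould (F : Type*) := (r : ℕ) → (Fin r → F) → F

/-- Extend a tuple `(x₁, …, x_r)` (0-indexed by `Fin r`) to all of `ℕ` using 1-based
indexing, with the conventions `x₀ = 0` and `x_j = 0` for `j > r`. -/
def mext {F : Type*} [Zero F] {r : ℕ} (x : Fin r → F) (j : ℕ) : F :=
  if h : 1 ≤ j ∧ j ≤ r then x ⟨j - 1, by omega⟩ else 0

/-- The map `♯`: `(f^♯)^{(r)}(x₁,…,x_r) = f^{(r)}(x₁, x₁+x₂, …, x₁+⋯+x_r)`. -/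
def sharp {F : Type*} [AddCommMonoid F] (f : Mould F) : Mould F :=
  fun r x => f r (fun i => ∑ j ∈ Finset.Iic i, x j)

/-- The map `♭`: `(f^♭)^{(r)}(x₁,…,x_r) = f^{(r)}(x₁, x₂-x₁, …, x_r-x_{r-1})`. -/
def flat {F : Type*} [SubtractionMonoid F] (f : Mould F) : Mould F :=
  fun r x => f r (fun i => mext x ((i : ℕ) + 1) - mext x (i : ℕ))

variable {F : Type*} [Field F]

/-- The linearized Ihara action `f ∘ g` of moulds: the depth-`d` component is
`∑_{r+s=d} f^{(r)} ∘ g^{(s)}`, where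
`(f^{(r)} ∘ g^{(s)})(x₁,…,x_{r+s}) = ∑_{i=0}^{s} f^{(r)}(x_{i+1}-x_i,…,x_{i+r}-x_i)
g^{(s)}(x₁,…,x_i,x_{i+r+1},…,x_{r+s}) + (-1)^r ∑_{i=1}^{s}
f^{(r)}(x_{i+r}-x_{i+r-1},…,x_{i+r}-x_i) g^{(s)}(x₁,…,x_{i-1},x_{i+r},…,x_{r+s})`,
with the convention `x₀ = 0`. -/
def iharaAct (f g : Mould F) : Mould F := fun d x =>
  ∑ m ∈ Finset.range (d + 1),
    (let s := d - m
     let X := mext x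
     (∑ i ∈ Finset.range (s + 1),
        f m (fun k => X (i + (k : ℕ) + 1) - X i) *
        g s (fun k => if (k : ℕ) + 1 ≤ i then X ((k : ℕ) + 1) else X ((k : ℕ) + 1 + m)))
     + (-1 : F) ^ m *
       ∑ i ∈ Finset.Icc 1 s,
        f m (fun k => X (i + m) - X (i + m - ((k : ℕ) + 1))) *
        g s (fun k => if (k : ℕ) + 1 < i then X ((k : ℕ) + 1) else X ((k : ℕ) + 1 + m)))

/-- The Ihara bracket `{f, g} = f ∘ g - g ∘ f`. -/
def iharaBracket (f g : Mould F) : Mould F :=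
  fun d x => iharaAct f g d x - iharaAct g f d x

/-- The preari action `f ∘_ari g` of moulds: the depth-`d` component is
`∑_{r+s=d} f^{(r)} ∘_ari g^{(s)}`, where `(f^{(r)} ∘_ari g^{(s)})(x₁,…,x_{r+s}) =
∑_{i=0}^{s} f^{(r)}(x_{i+1},…,x_{i+r}) g^{(s)}(x₁,…,x_i, x_{i+1}+⋯+x_{i+r+1},
x_{i+r+2},…,x_{r+s}) - ∑_{i=1}^{s} f^{(r)}(x_{i+1},…,x_{i+r}) g^{(s)}(x₁,…,x_{i-1},
x_i+⋯+x_{i+r}, x_{i+r+1},…,x_{r+s})`. -/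
def preariAct (f g : Mould F) : Mould F := fun d x =>
  ∑ m ∈ Finset.range (d + 1),
    (let s := d - m
     let X := mext x
     (∑ i ∈ Finset.range (s + 1),
        f m (fun k => X (i + (k : ℕ) + 1)) *
        g s (fun k =>
          if (k : ℕ) + 1 ≤ i then X ((k : ℕ) + 1)
          else if (k : ℕ) + 1 = i + 1 then ∑ j ∈ Finset.Icc (i + 1) (i + m + 1), X j
          else X ((k : ℕ) + 1 + m)))
     - ∑ i ∈ Finset.Icc 1 s,
        f m (fun k => X (i + (k : ℕ) + 1)) *
        g s (fun k =>
          if (k : ℕ) + 1 < i then X ((k : ℕ) + 1)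
          else if (k : ℕ) + 1 = i then ∑ j ∈ Finset.Icc i (i + m), X j
          else X ((k : ℕ) + 1 + m)))

/-- The ari bracket `{f, g}_ari = f ∘_ari g - g ∘_ari f`. -/
def ariBracket (f g : Mould F) : Mould F :=
  fun d x => preariAct f g d x - preariAct g f d x

/-- The anti-palindromic condition defining the subspace `𝒱`:
`f^{(r)}(x₁,…,x_r) + (-1)^r f^{(r)}(x_r,…,x₁) = 0` for all `r`
(in depth `0` this forces `f^{(0)} = 0`). -/
def MemV (f : Mould F) : Prop :=
  ∀ (r : ℕ) (x : Fin r → F), f r x + (-1 : F) ^ r * f r (fun i => x i.rev) = 0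

private lemma npms (d : ℕ) : ((-1:ℚ)^d) * (-1:ℚ)^d = 1 := by rw [← mul_pow]; norm_num

private lemma flipV (f : Mould ℚ) (hf : MemV f) (r : ℕ) (u v : Fin r → ℚ)
    (h : ∀ k : Fin r, u k = v k.rev) : f r u = -((-1:ℚ)^r * f r v) := by
  have hu : u = fun k => v k.rev := funext h
  rw [hu]
  linear_combination (-1:ℚ)^r * hf r v - f r (fun k => v k.rev) * npms r

private lemma sum_Icc_rev (X : ℕ → ℚ) (a b N : ℕ) (ha : 1 ≤ a) (hab : a ≤ b) (hb : b ≤ N) :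
    ∑ j ∈ Finset.Icc a b, X (N - j) = ∑ j ∈ Finset.Icc (N - b) (N - a), X j := by
  apply Finset.sum_nbij' (fun j => N - j) (fun j => N - j) <;>
    (intros; simp_all only [Finset.mem_Icc]; try omega) <;>
    (rename_i j hj; congr 1; omega)

private lemma sum_Icc_one (s : ℕ) (h : ℕ → ℚ) :
    ∑ i ∈ Finset.Icc 1 s, h i = ∑ i ∈ Finset.range s, h (i + 1) := by
  apply Finset.sum_nbij' (fun i => i - 1) (fun i => i + 1) <;>
    (intros; simp_all only [Finset.mem_Icc, Finset.mem_range]; try omega) <;>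
    (rename_i j hj; congr 1; omega)

private lemma mext_rev {d : ℕ} (x : Fin d → ℚ) (j : ℕ) :
    mext (fun i => x i.rev) j = mext x (d + 1 - j) := by
  unfold mext
  split_ifs with h1 h2 h2
  · show x _ = x _
    congr 1
    ext
    simp only [Fin.val_rev]
    omega
  · omega
  · omega
  · rfl

private lemma signMulQ (d m : ℕ) (hm : m ≤ d) (A B : ℚ) :
    (-1:ℚ)^d * (-((-1:ℚ)^m * A) * -((-1:ℚ)^(d-m) * B)) = A * B := by
  have h1 : (-1:ℚ)^m * (-1:ℚ)^(d-m) = (-1:ℚ)^d := by rw [← pow_add]; congr 1; omega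
  calc (-1:ℚ)^d * (-((-1:ℚ)^m * A) * -((-1:ℚ)^(d-m) * B))
      = ((-1:ℚ)^d * ((-1:ℚ)^m * (-1:ℚ)^(d-m))) * (A * B) := by ring
    _ = ((-1:ℚ)^d * (-1:ℚ)^d) * (A * B) := by rw [h1]
    _ = A * B := by rw [npms d, one_mul]

private lemma termA_rev (f g : Mould ℚ) (hf : MemV f) (hg : MemV g) (d m i i' : ℕ) (hm : m ≤ d)
    (hi : i < d - m) (hi' : i' = d - m - i) (x : Fin d → ℚ) :
    (-1:ℚ)^d * ((f m fun k => mext x (d + 1 - (i + ↑k + 1))) *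
      g (d - m) fun k =>
        if (k:ℕ) + 1 ≤ i then mext x (d + 1 - ((k:ℕ) + 1))
        else if (k:ℕ) + 1 = i + 1 then ∑ j ∈ Finset.Icc (i + 1) (i + m + 1), mext x (d + 1 - j)
        else mext x (d + 1 - ((k:ℕ) + 1 + m))) =
    (f m fun k => mext x (i' + ↑k + 1)) *
      g (d - m) fun k =>
        if (k:ℕ) + 1 < i' then mext x ((k:ℕ) + 1)
        else if (k:ℕ) + 1 = i' then ∑ j ∈ Finset.Icc i' (i' + m), mext x j
        else mext x ((k:ℕ) + 1 + m) := by
  have hF := flipV f hf m (fun k => mext x (d + 1 - (i + ↑k + 1)))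
    (fun k => mext x (i' + ↑k + 1)) (by
      intro k; have hk := k.isLt
      show mext x _ = mext x _
      congr 1; rw [Fin.val_rev]; omega)
  have hG := flipV g hg (d - m)
    (fun k => if (k:ℕ) + 1 ≤ i then mext x (d + 1 - ((k:ℕ) + 1))
        else if (k:ℕ) + 1 = i + 1 then ∑ j ∈ Finset.Icc (i + 1) (i + m + 1), mext x (d + 1 - j)
        else mext x (d + 1 - ((k:ℕ) + 1 + m)))
    (fun k => if (k:ℕ) + 1 < i' then mext x ((k:ℕ) + 1)
        else if (k:ℕ) + 1 = i' then ∑ j ∈ Finset.Icc i' (i' + m), mext x j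
        else mext x ((k:ℕ) + 1 + m)) (by
      intro k; have hk := k.isLt
      have hkr : ((Fin.rev k : Fin (d - m)) : ℕ) = d - m - (↑k + 1) := Fin.val_rev k
      split_ifs <;>
        first
          | (exfalso; omega)
          | (congr 1; omega)
          | (rw [sum_Icc_rev (mext x) (i+1) (i+m+1) (d+1) (by omega) (by omega) (by omega),
                 show d + 1 - (i + m + 1) = i' by omega, show d + 1 - (i + 1) = i' + m by omega]))
  rw [hF, hG]
  exact signMulQ d m hm _ _

private lemma termB_rev (f g : Mould ℚ) (hf : MemV f) (hg : MemV g) (d m ii i' : ℕ) (hm : m ≤ d)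
    (h1 : 1 ≤ ii) (h2 : ii ≤ d - m) (hi' : i' = d - m - ii) (x : Fin d → ℚ) :
    (-1:ℚ)^d * ((f m fun k => mext x (d + 1 - (ii + ↑k + 1))) *
      g (d - m) fun k =>
        if (k:ℕ) + 1 < ii then mext x (d + 1 - ((k:ℕ) + 1))
        else if (k:ℕ) + 1 = ii then ∑ j ∈ Finset.Icc ii (ii + m), mext x (d + 1 - j)
        else mext x (d + 1 - ((k:ℕ) + 1 + m))) =
    (f m fun k => mext x (i' + ↑k + 1)) *
      g (d - m) fun k =>
        if (k:ℕ) + 1 ≤ i' then mext x ((k:ℕ) + 1)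
        else if (k:ℕ) + 1 = i' + 1 then ∑ j ∈ Finset.Icc (i' + 1) (i' + m + 1), mext x j
        else mext x ((k:ℕ) + 1 + m) := by
  have hF := flipV f hf m (fun k => mext x (d + 1 - (ii + ↑k + 1)))
    (fun k => mext x (i' + ↑k + 1)) (by
      intro k; have hk := k.isLt
      show mext x _ = mext x _
      congr 1; rw [Fin.val_rev]; omega)
  have hG := flipV g hg (d - m)
    (fun k => if (k:ℕ) + 1 < ii then mext x (d + 1 - ((k:ℕ) + 1))
        else if (k:ℕ) + 1 = ii then ∑ j ∈ Finset.Icc ii (ii + m), mext x (d + 1 - j)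
        else mext x (d + 1 - ((k:ℕ) + 1 + m)))
    (fun k => if (k:ℕ) + 1 ≤ i' then mext x ((k:ℕ) + 1)
        else if (k:ℕ) + 1 = i' + 1 then ∑ j ∈ Finset.Icc (i' + 1) (i' + m + 1), mext x j
        else mext x ((k:ℕ) + 1 + m)) (by
      intro k; have hk := k.isLt
      have hkr : ((Fin.rev k : Fin (d - m)) : ℕ) = d - m - (↑k + 1) := Fin.val_rev k
      split_ifs <;>
        first
          | (exfalso; omega)
          | (congr 1; omega)
          | (rw [sum_Icc_rev (mext x) ii (ii + m) (d+1) (by omega) (by omega) (by omega),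
                 show d + 1 - (ii + m) = i' + 1 by omega, show d + 1 - ii = i' + m + 1 by omega]))
  rw [hF, hG]
  exact signMulQ d m hm _ _

private lemma termC_rev (f g : Mould ℚ) (hf : MemV f) (hg : MemV g) (d m : ℕ) (hm : m ≤ d)
    (x : Fin d → ℚ) :
    (-1:ℚ)^d * ((f m fun k => mext x (d + 1 - (d - m + ↑k + 1))) *
      g (d - m) fun k =>
        if (k:ℕ) + 1 ≤ d - m then mext x (d + 1 - ((k:ℕ) + 1))
        else if (k:ℕ) + 1 = d - m + 1 then ∑ j ∈ Finset.Icc (d - m + 1) (d - m + m + 1), mext x (d + 1 - j)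
        else mext x (d + 1 - ((k:ℕ) + 1 + m))) =
    (f m fun k => mext x (↑k + 1)) * g (d - m) fun k => mext x (m + ↑k + 1) := by
  have hF := flipV f hf m (fun k => mext x (d + 1 - (d - m + ↑k + 1)))
    (fun k => mext x (↑k + 1)) (by
      intro k; have hk := k.isLt
      show mext x _ = mext x _
      congr 1; rw [Fin.val_rev]; omega)
  have hG := flipV g hg (d - m)
    (fun k => if (k:ℕ) + 1 ≤ d - m then mext x (d + 1 - ((k:ℕ) + 1))
        else if (k:ℕ) + 1 = d - m + 1 then ∑ j ∈ Finset.Icc (d - m + 1) (d - m + m + 1), mext x (d + 1 - j)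
        else mext x (d + 1 - ((k:ℕ) + 1 + m)))
    (fun k => mext x (m + ↑k + 1)) (by
      intro k; have hk := k.isLt
      have hkr : ((Fin.rev k : Fin (d - m)) : ℕ) = d - m - (↑k + 1) := Fin.val_rev k
      split_ifs <;>
        first
          | (exfalso; omega)
          | (congr 1; omega))
  rw [hF, hG]
  exact signMulQ d m hm _ _

private lemma termD (f g : Mould ℚ) (d m : ℕ) (x : Fin d → ℚ) :
    (f m fun k => mext x (d - m + ↑k + 1)) *
      (g (d - m) fun k =>
        if (k:ℕ) + 1 ≤ d - m then mext x ((k:ℕ) + 1)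
        else if (k:ℕ) + 1 = d - m + 1 then ∑ j ∈ Finset.Icc (d - m + 1) (d - m + m + 1), mext x j
        else mext x ((k:ℕ) + 1 + m)) =
    (f m fun k => mext x (d - m + ↑k + 1)) * g (d - m) fun k => mext x (↑k + 1) := by
  congr 1
  congr 1
  funext k
  rw [if_pos (by have := k.isLt; omega)]

/-- The symmetric boundary correction term. -/
private def corr (f g : Mould ℚ) : Mould ℚ := fun d x =>
  ∑ m ∈ Finset.range (d + 1),
    (f m (fun k => mext x ((d - m) + (k : ℕ) + 1)) * g (d - m) (fun k => mext x ((k : ℕ) + 1))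
     + f m (fun k => mext x ((k : ℕ) + 1)) * g (d - m) (fun k => mext x (m + (k : ℕ) + 1)))

private lemma corr_symm (f g : Mould ℚ) (d : ℕ) (x : Fin d → ℚ) : corr f g d x = corr g f d x := by
  unfold corr
  refine Finset.sum_nbij' (fun m => d - m) (fun m => d - m) ?_ ?_ ?_ ?_ ?_ <;>
    intro a ha <;> simp only [Finset.mem_range] at *
  · omega
  · omega
  · omega
  · omega
  · rw [show d - (d - a) = a from by omega]
    ring

private lemma key (f g : Mould ℚ) (hf : MemV f) (hg : MemV g) (d : ℕ) (x : Fin d → ℚ) :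
    (-1:ℚ)^d * preariAct f g d (fun i => x i.rev) = - preariAct f g d x + corr f g d x := by
  unfold preariAct corr
  simp only [mext_rev x]
  rw [Finset.mul_sum, neg_add_eq_sub, ← Finset.sum_sub_distrib]
  apply Finset.sum_congr rfl
  intro m hm
  have hm' : m ≤ d := Nat.lt_succ_iff.mp (Finset.mem_range.mp hm)
  rw [mul_sub, Finset.mul_sum, Finset.mul_sum, sum_Icc_one, sum_Icc_one,
      Finset.sum_range_succ, Finset.sum_range_succ]
  have a1 : ∑ i ∈ Finset.range (d - m),
        (-1:ℚ) ^ d *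
          ((f m fun k => mext x (d + 1 - (i + ↑k + 1))) *
            g (d - m) fun k =>
              if ↑k + 1 ≤ i then mext x (d + 1 - (↑k + 1))
              else
                if ↑k + 1 = i + 1 then ∑ j ∈ Finset.Icc (i + 1) (i + m + 1), mext x (d + 1 - j)
                else mext x (d + 1 - (↑k + 1 + m))) =
      ∑ i ∈ Finset.range (d - m),
        (f m fun k => mext x (i + 1 + ↑k + 1)) *
          g (d - m) fun k =>
            if ↑k + 1 < i + 1 then mext x (↑k + 1)
            else if ↑k + 1 = i + 1 then ∑ j ∈ Finset.Icc (i + 1) (i + 1 + m), mext x j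
            else mext x (↑k + 1 + m) := by
    refine Finset.sum_nbij' (fun i => d - m - 1 - i) (fun i => d - m - 1 - i) ?_ ?_ ?_ ?_ ?_ <;>
      intro a ha <;> simp only [Finset.mem_range] at *
    · omega
    · omega
    · omega
    · omega
    · exact termA_rev f g hf hg d m a (d - m - 1 - a + 1) hm' ha (by omega) x
  have a3 : ∑ i ∈ Finset.range (d - m),
        (-1:ℚ) ^ d *
          ((f m fun k => mext x (d + 1 - (i + 1 + ↑k + 1))) *
            g (d - m) fun k =>
              if ↑k + 1 < i + 1 then mext x (d + 1 - (↑k + 1))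
              else
                if ↑k + 1 = i + 1 then ∑ j ∈ Finset.Icc (i + 1) (i + 1 + m), mext x (d + 1 - j)
                else mext x (d + 1 - (↑k + 1 + m))) =
      ∑ i ∈ Finset.range (d - m),
        (f m fun k => mext x (i + ↑k + 1)) *
          g (d - m) fun k =>
            if ↑k + 1 ≤ i then mext x (↑k + 1)
            else if ↑k + 1 = i + 1 then ∑ j ∈ Finset.Icc (i + 1) (i + m + 1), mext x j
            else mext x (↑k + 1 + m) := by
    refine Finset.sum_nbij' (fun i => d - m - 1 - i) (fun i => d - m - 1 - i) ?_ ?_ ?_ ?_ ?_ <;>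
      intro a ha <;> simp only [Finset.mem_range] at *
    · omega
    · omega
    · omega
    · omega
    · exact termB_rev f g hf hg d m (a + 1) (d - m - 1 - a) hm' (by omega) (by omega) (by omega) x
  rw [a1, a3, termC_rev f g hf hg d m hm' x, termD f g d m x]
  ring

/-- The space `𝒱` of anti-palindromic moulds is closed under the ari bracket:
if `f, g ∈ 𝒱` then `{f, g}_ari ∈ 𝒱`. -/
theorem memV_ariBracket (f g : Mould ℚ) (hf : MemV f) (hg : MemV g) :
    MemV (ariBracket f g) := by
  intro d x
  have k1 := key f g hf hg d x
  have k2 := key g f hg hf d x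
  have hc := corr_symm f g d x
  unfold ariBracket
  linear_combination k1 - k2 + hc
end

section
/- For any sequence $f$ of rational functions satisfying the anti-palindromic condition $f^{(r)}(x_1,\ldots,x_r) + (-1)^r f^{(r)}(x_r,\ldots,x_1) = 0$ for all $r$, and any sequence $g$ of rational functions, one has $(f \circ_{\mathrm{ari}} g)^\flat = f^\flat \circ g^\flat$, where $\circ_{\mathrm{ari}}$ is the preari action, $\circ$ is the linearized Ihara action, and $\flat$ is the change-of-variables map. Consequently $\{f,g\}_{\mathrm{ari}}^\flat = \{f^\flat, g^\flat\}$ for $f, g$ both anti-palindromic. -/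
open Finset

variable {F : Type*} [Field F]

private lemma mext_pos {r : ℕ} (x : Fin r → ℚ) {j : ℕ} (h1 : 1 ≤ j) (h2 : j ≤ r) :
    mext x j = x ⟨j - 1, by omega⟩ := dif_pos ⟨h1, h2⟩

private lemma mext_zero {r : ℕ} (x : Fin r → ℚ) : mext x 0 = 0 := by simp [mext]

private lemma flat_apply (f : Mould ℚ) {r : ℕ} (v : Fin r → ℚ) (V : ℕ → ℚ)
    (hV0 : V 0 = 0) (hV : ∀ k : Fin r, v k = V ((k : ℕ) + 1)) :
    flat f r v = f r (fun k => V ((k : ℕ) + 1) - V (k : ℕ)) := by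
  unfold flat
  congr 1
  funext k
  have hk := k.isLt
  have h1 : mext v ((k : ℕ) + 1) = V ((k : ℕ) + 1) := by
    rw [mext_pos v (by omega) (by omega), hV]
    show V ((k:ℕ) + 1 - 1 + 1) = V ((k:ℕ) + 1)
    congr 1
  have h2 : mext v (k : ℕ) = V (k : ℕ) := by
    rcases Nat.eq_zero_or_pos (k : ℕ) with h | h
    · rw [h, mext_zero, hV0]
    · rw [mext_pos v h (by omega), hV]
      show V ((k:ℕ) - 1 + 1) = V (k:ℕ)
      congr 1
      omega
  rw [h1, h2]

private lemma tele (X : ℕ → ℚ) {a b : ℕ} (ha : 1 ≤ a) (hab : a ≤ b) :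
    ∑ j ∈ Finset.Icc a b, (X j - X (j - 1)) = X b - X (a - 1) := by
  induction b with
  | zero => omega
  | succ n ih =>
    rcases Nat.lt_or_ge n a with h | h
    · have : a = n + 1 := by omega
      subst this
      simp
    · rw [← Finset.insert_Icc_right_eq_Icc_add_one (by omega), Finset.sum_insert (by simp)]
      rw [ih h]
      have e : n + 1 - 1 = n := rfl
      rw [e]
      ring

private lemma flat_preari (f g : Mould ℚ) (hf : MemV f) :
    flat (preariAct f g) = iharaAct (flat f) (flat g) := by
  funext d x
  show preariAct f g d (fun i : Fin d => mext x ((i:ℕ)+1) - mext x (i:ℕ)) = _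
  unfold preariAct iharaAct
  refine Finset.sum_congr rfl fun m hm => ?_
  have hmd : m ≤ d := by have := Finset.mem_range.mp hm; omega
  dsimp only
  set y : Fin d → ℚ := fun i : Fin d => mext x ((i:ℕ)+1) - mext x (i:ℕ) with hy
  have hYX : ∀ j : ℕ, j ≤ d → mext y j = mext x j - mext x (j - 1) := by
    intro j hj
    rcases Nat.eq_zero_or_pos j with h | h
    · subst h
      simp [mext_zero]
    · rw [mext_pos y h hj]
      show mext x (j - 1 + 1) - mext x (j - 1) = _
      have e : j - 1 + 1 = j := by omega
      rw [e]
  rw [sub_eq_add_neg]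
  congr 1
  · refine Finset.sum_congr rfl fun i hi => ?_
    have his : i ≤ d - m := by have := Finset.mem_range.mp hi; omega
    have hF : flat f m (fun k => mext x (i + (k:ℕ) + 1) - mext x i)
        = f m (fun k => mext y (i + (k:ℕ) + 1)) := by
      rw [flat_apply f (fun k => mext x (i + (k:ℕ) + 1) - mext x i)
        (fun j => mext x (i + j) - mext x i) (by simp) (fun k => rfl)]
      congr 1
      funext k
      have hk := k.isLt
      rw [hYX (i + (k:ℕ) + 1) (by omega)]
      show (mext x (i + (k:ℕ) + 1) - mext x i) - (mext x (i + (k:ℕ)) - mext x i)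
          = mext x (i + (k:ℕ) + 1) - mext x (i + (k:ℕ) + 1 - 1)
      have e : i + (k:ℕ) + 1 - 1 = i + (k:ℕ) := by omega
      rw [e]
      ring
    have hG : flat g (d - m) (fun k => if (k:ℕ) + 1 ≤ i then mext x ((k:ℕ) + 1) else mext x ((k:ℕ) + 1 + m))
        = g (d - m) (fun k =>
            if (k:ℕ) + 1 ≤ i then mext y ((k:ℕ) + 1)
            else if (k:ℕ) + 1 = i + 1 then ∑ j ∈ Finset.Icc (i + 1) (i + m + 1), mext y j
            else mext y ((k:ℕ) + 1 + m)) := by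
      rw [flat_apply g _ (fun j => if j ≤ i then mext x j else mext x (j + m)) (by simp [mext_zero]) (fun k => rfl)]
      congr 1
      funext k
      have hk := k.isLt
      by_cases h1 : (k:ℕ) + 1 ≤ i
      · rw [if_pos h1, if_pos h1, if_pos (by omega : (k:ℕ) ≤ i), hYX ((k:ℕ) + 1) (by omega)]
        have e : (k:ℕ) + 1 - 1 = (k:ℕ) := by omega
        rw [e]
      · rw [if_neg h1, if_neg h1]
        by_cases h2 : (k:ℕ) + 1 = i + 1
        · rw [if_pos h2, if_pos (by omega : (k:ℕ) ≤ i)]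
          have hsum : ∑ j ∈ Finset.Icc (i + 1) (i + m + 1), mext y j
              = mext x (i + m + 1) - mext x i := by
            rw [Finset.sum_congr rfl fun j hj => hYX j (by have := Finset.mem_Icc.mp hj; omega)]
            rw [tele (mext x) (by omega) (by omega)]
            have e : i + 1 - 1 = i := by omega
            rw [e]
          rw [hsum]
          have e1 : (k:ℕ) + 1 + m = i + m + 1 := by omega
          have e2 : (k:ℕ) = i := by omega
          rw [e1, e2]
        · rw [if_neg h2, if_neg (by omega : ¬ (k:ℕ) ≤ i), hYX ((k:ℕ) + 1 + m) (by omega)]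
          have e : (k:ℕ) + 1 + m - 1 = (k:ℕ) + m := by omega
          rw [e]
    rw [hF, hG]
  · rw [Finset.mul_sum, ← Finset.sum_neg_distrib]
    refine Finset.sum_congr rfl fun i hi => ?_
    obtain ⟨hi1, hi2⟩ := Finset.mem_Icc.mp hi
    have hFrev : flat f m (fun k => mext x (i + m) - mext x (i + m - ((k:ℕ) + 1)))
        = f m (fun k : Fin m => mext y (i + m - (k:ℕ))) := by
      rw [flat_apply f _ (fun j => mext x (i + m) - mext x (i + m - j)) (by simp) (fun k => rfl)]
      congr 1
      funext k
      have hk := k.isLt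
      rw [hYX (i + m - (k:ℕ)) (by omega)]
      have e : i + m - (k:ℕ) - 1 = i + m - ((k:ℕ) + 1) := by omega
      rw [e]
      ring
    have hrel : (-1:ℚ) ^ m * f m (fun k : Fin m => mext y (i + m - (k:ℕ)))
        = - f m (fun k : Fin m => mext y (i + (k:ℕ) + 1)) := by
      have h := hf m (fun k : Fin m => mext y (i + (k:ℕ) + 1))
      have e : (fun k : Fin m => mext y (i + ((k.rev : ℕ)) + 1))
          = (fun k : Fin m => mext y (i + m - (k:ℕ))) := by
        funext k
        have hk := k.isLt
        rw [Fin.val_rev]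
        congr 1
        omega
      rw [e] at h
      linarith
    have hGrev : flat g (d - m) (fun k => if (k:ℕ) + 1 < i then mext x ((k:ℕ) + 1) else mext x ((k:ℕ) + 1 + m))
        = g (d - m) (fun k =>
            if (k:ℕ) + 1 < i then mext y ((k:ℕ) + 1)
            else if (k:ℕ) + 1 = i then ∑ j ∈ Finset.Icc i (i + m), mext y j
            else mext y ((k:ℕ) + 1 + m)) := by
      rw [flat_apply g _ (fun j => if j = 0 then 0 else if j < i then mext x j else mext x (j + m))
        (by simp) (fun k => by simp)]
      congr 1
      funext k
      have hk := k.isLt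
      rw [if_neg (by omega : ¬ (k:ℕ) + 1 = 0)]
      by_cases h1 : (k:ℕ) + 1 < i
      · rw [if_pos h1, if_pos h1, hYX ((k:ℕ) + 1) (by omega)]
        have e : (k:ℕ) + 1 - 1 = (k:ℕ) := by omega
        rw [e]
        rcases Nat.eq_zero_or_pos (k:ℕ) with h0 | h0
        · rw [h0]
          simp [mext_zero]
        · rw [if_neg (by omega : ¬ (k:ℕ) = 0), if_pos (by omega : (k:ℕ) < i)]
      · rw [if_neg h1, if_neg h1]
        by_cases h2 : (k:ℕ) + 1 = i
        · rw [if_pos h2]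
          have hsum : ∑ j ∈ Finset.Icc i (i + m), mext y j = mext x (i + m) - mext x (i - 1) := by
            rw [Finset.sum_congr rfl fun j hj => hYX j (by have := Finset.mem_Icc.mp hj; omega)]
            rw [tele (mext x) hi1 (by omega)]
          rw [hsum]
          have e1 : (k:ℕ) + 1 + m = i + m := by omega
          rw [e1]
          rcases Nat.eq_zero_or_pos (k:ℕ) with h0 | h0
          · rw [if_pos h0]
            have e2 : i - 1 = 0 := by omega
            rw [e2, mext_zero]
          · rw [if_neg (by omega : ¬ (k:ℕ) = 0), if_pos (by omega : (k:ℕ) < i)]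
            have e2 : (k:ℕ) = i - 1 := by omega
            rw [e2]
        · rw [if_neg h2, if_neg (by omega : ¬ (k:ℕ) = 0), if_neg (by omega : ¬ (k:ℕ) < i)]
          rw [hYX ((k:ℕ) + 1 + m) (by omega)]
          have e : (k:ℕ) + 1 + m - 1 = (k:ℕ) + m := by omega
          rw [e]
    rw [hFrev, hGrev, ← mul_assoc, hrel, neg_mul]


/-- For `f` anti-palindromic and `g` arbitrary, `(f ∘_ari g)^♭ = f^♭ ∘ g^♭`;
consequently `{f, g}_ari^♭ = {f^♭, g^♭}` when `f` and `g` are both anti-palindromic. -/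
theorem flat_preari_eq_ihara (f g : Mould ℚ) (hf : MemV f) :
    flat (preariAct f g) = iharaAct (flat f) (flat g) ∧
    (MemV g → flat (ariBracket f g) = iharaBracket (flat f) (flat g)) := by
  refine ⟨flat_preari f g hf, fun hg => ?_⟩
  have h1 := flat_preari f g hf
  have h2 := flat_preari g f hg
  funext d x
  show flat (preariAct f g) d x - flat (preariAct g f) d x = _
  rw [h1, h2]
  rfl
end

section
/- Let $f^{(2)}(x_1, x_2) = x_1 + x_2$ (a depth-2 polynomial) and $g^{(1)}(x_1) = x_1$ (a depth-1 polynomial). Then the depth-3 component of $\{f, g\}_{\mathrm{ari}}^\flat - \{f^\flat, g^\flat\}$ equals $2(x_1 - x_3) x_3$, and in particular is nonzero. -/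
/-!
Since `f` and `g` each live in a single depth (2 and 1), and `♭` preserves this, each of the
four actions in depth 3 reduces to its single summand with `r + s = 3`. Evaluating these gives
`{f, g}_ari^{(3)}(y) = y₂ (y₁ - y₃)` and
`{f^♭, g^♭}^{(3)}(x) = x₂² - x₁² + 2x₃² - x₂x₃ - x₁x₃`; applying `♭` to the first and
subtracting leaves `2 (x₁ - x₃) x₃`.
-/

open Finset

variable {F : Type*} [Field F]

/-- The mould whose only nonzero component is the depth-2 polynomial `x₁ + x₂`. -/
def fEx : Mould ℚ
  | 2 => fun x => x 0 + x 1
  | _ => fun _ => 0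

/-- The mould whose only nonzero component is the depth-1 polynomial `x₁`. -/
def gEx : Mould ℚ
  | 1 => fun x => x 0
  | _ => fun _ => 0

section MouldActions

variable {r d : ℕ}

/-- The summand `f^{(m)} ∘_ari g^{(d-m)}` of `preariAct f g d`. -/
def preariComp (f g : Mould F) (m d : ℕ) (x : Fin d → F) : F :=
  let s := d - m
  let X := mext x
  (∑ i ∈ Finset.range (s + 1),
      f m (fun k => X (i + (k : ℕ) + 1)) *
      g s (fun k =>
        if (k : ℕ) + 1 ≤ i then X ((k : ℕ) + 1)
        else if (k : ℕ) + 1 = i + 1 then ∑ j ∈ Finset.Icc (i + 1) (i + m + 1), X j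
        else X ((k : ℕ) + 1 + m)))
    - ∑ i ∈ Finset.Icc 1 s,
      f m (fun k => X (i + (k : ℕ) + 1)) *
      g s (fun k =>
        if (k : ℕ) + 1 < i then X ((k : ℕ) + 1)
        else if (k : ℕ) + 1 = i then ∑ j ∈ Finset.Icc i (i + m), X j
        else X ((k : ℕ) + 1 + m))

/-- The summand `f^{(m)} ∘ g^{(d-m)}` of `iharaAct f g d`. -/
def iharaComp (f g : Mould F) (m d : ℕ) (x : Fin d → F) : F :=
  let s := d - m
  let X := mext x
  (∑ i ∈ Finset.range (s + 1),
      f m (fun k => X (i + (k : ℕ) + 1) - X i) *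
      g s (fun k => if (k : ℕ) + 1 ≤ i then X ((k : ℕ) + 1) else X ((k : ℕ) + 1 + m)))
    + (-1 : F) ^ m *
      ∑ i ∈ Finset.Icc 1 s,
      f m (fun k => X (i + m) - X (i + m - ((k : ℕ) + 1))) *
      g s (fun k => if (k : ℕ) + 1 < i then X ((k : ℕ) + 1) else X ((k : ℕ) + 1 + m))

theorem preariAct_eq_preariComp {f : Mould F} (g : Mould F) (hf : ∀ m ≠ r, f m = 0)
    (hr : r ≤ d) (x : Fin d → F) : preariAct f g d x = preariComp f g r d x :=
  Finset.sum_eq_single_of_mem r (by simpa [Nat.lt_succ_iff]) fun m _ hm => by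
    simp [hf m hm]

theorem iharaAct_eq_iharaComp {f : Mould F} (g : Mould F) (hf : ∀ m ≠ r, f m = 0)
    (hr : r ≤ d) (x : Fin d → F) : iharaAct f g d x = iharaComp f g r d x :=
  Finset.sum_eq_single_of_mem r (by simpa [Nat.lt_succ_iff]) fun m _ hm => by
    simp [hf m hm]

end MouldActions

theorem flat_apply_three {G : Type*} [AddCommGroup G] (f : Mould G) (x : Fin 3 → G) :
    flat f 3 x = f 3 ![x 0, x 1 - x 0, x 2 - x 1] := by
  simp only [flat]
  congr 1
  funext i
  fin_cases i <;> simp [mext]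

theorem flat_eq_zero_of_eq_zero {G : Type*} [SubtractionMonoid G] {f : Mould G} {m : ℕ}
    (h : f m = 0) : flat f m = 0 := by
  funext x
  simp [flat, h]

theorem fEx_of_ne_two {m : ℕ} (hm : m ≠ 2) : fEx m = 0 := by
  funext x; simp [fEx]

theorem gEx_of_ne_one {m : ℕ} (hm : m ≠ 1) : gEx m = 0 := by
  funext x; simp [gEx]

theorem flat_fEx_two : flat fEx 2 = fun x => x 1 := by
  funext x
  simp [flat, fEx, mext]

theorem flat_gEx_one : flat gEx 1 = fun x => x 0 := by
  funext x
  simp [flat, gEx, mext]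

theorem preariComp_fEx_gEx (y : Fin 3 → ℚ) :
    preariComp fEx gEx 2 3 y = (y 0 + y 1 + y 2) * (y 0 - y 2) + y 0 * (y 1 + y 2) := by
  simp [preariComp, fEx, gEx, mext, Finset.sum_range_succ, Finset.sum_Icc_succ_top]
  ring

theorem preariComp_gEx_fEx (y : Fin 3 → ℚ) :
    preariComp gEx fEx 1 3 y = y 0 * (y 0 + y 1 + y 2) - y 2 ^ 2 := by
  simp [preariComp, fEx, gEx, mext, Finset.sum_range_succ, Finset.sum_Icc_succ_top]
  ring

theorem iharaComp_flat_fEx_flat_gEx (x : Fin 3 → ℚ) :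
    iharaComp (flat fEx) (flat gEx) 2 3 x = x 1 * x 2 + (x 2 - x 0) * (x 0 + x 2) := by
  simp [iharaComp, flat_fEx_two, flat_gEx_one, mext, Finset.sum_range_succ]
  ring

theorem iharaComp_flat_gEx_flat_fEx (x : Fin 3 → ℚ) :
    iharaComp (flat gEx) (flat fEx) 1 3 x = 2 * x 1 * x 2 - x 1 ^ 2 - x 2 ^ 2 + x 0 * x 2 := by
  simp [iharaComp, flat_fEx_two, flat_gEx_one, mext, Finset.sum_range_succ, Finset.sum_Icc_succ_top]
  ring

theorem ariBracket_fEx_gEx (y : Fin 3 → ℚ) : ariBracket fEx gEx 3 y = y 1 * (y 0 - y 2) := by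
  simp only [ariBracket]
  rw [preariAct_eq_preariComp gEx (fun _ => fEx_of_ne_two) (by norm_num),
    preariAct_eq_preariComp fEx (fun _ => gEx_of_ne_one) (by norm_num),
    preariComp_fEx_gEx, preariComp_gEx_fEx]
  ring

theorem iharaBracket_flat_fEx_flat_gEx (x : Fin 3 → ℚ) :
    iharaBracket (flat fEx) (flat gEx) 3 x =
      x 1 ^ 2 - x 0 ^ 2 + 2 * x 2 ^ 2 - x 1 * x 2 - x 0 * x 2 := by
  simp only [iharaBracket]
  rw [iharaAct_eq_iharaComp (flat gEx) (fun _ hm => flat_eq_zero_of_eq_zero (fEx_of_ne_two hm))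
      (by norm_num),
    iharaAct_eq_iharaComp (flat fEx) (fun _ hm => flat_eq_zero_of_eq_zero (gEx_of_ne_one hm))
      (by norm_num),
    iharaComp_flat_fEx_flat_gEx, iharaComp_flat_gEx_flat_fEx]
  ring

/-- For `f^{(2)}(x₁,x₂) = x₁ + x₂` and `g^{(1)}(x₁) = x₁`, the depth-3 component of
`{f,g}_ari^♭ - {f^♭, g^♭}` equals `2(x₁ - x₃)x₃`; in particular it is nonzero. -/
theorem flat_bracket_counterexample :
    (∀ x : Fin 3 → ℚ,
      flat (ariBracket fEx gEx) 3 x - iharaBracket (flat fEx) (flat gEx) 3 x =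
        2 * (x 0 - x 2) * x 2) ∧
    (∃ x : Fin 3 → ℚ,
      flat (ariBracket fEx gEx) 3 x - iharaBracket (flat fEx) (flat gEx) 3 x ≠ 0) := by
  have key : ∀ x : Fin 3 → ℚ,
      flat (ariBracket fEx gEx) 3 x - iharaBracket (flat fEx) (flat gEx) 3 x =
        2 * (x 0 - x 2) * x 2 := fun x => by
    rw [flat_apply_three, ariBracket_fEx_gEx, iharaBracket_flat_fEx_flat_gEx]
    simp only [Matrix.cons_val]
    ring
  exact ⟨key, ![1, 0, 2], by rw [key]; norm_num [Matrix.cons_val_two]⟩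
end

section
/- The rational function $Q_4$ satisfies the depth-4 linearized shuffle equation in the first slot: $Q_4(x_1,x_2,x_3,x_4) + Q_4(x_2,x_1,x_3,x_4) + Q_4(x_2,x_3,x_1,x_4) + Q_4(x_2,x_3,x_4,x_1) = 0$, i.e. the sum of $Q_4$ over the four shuffles of the words $\mathsf{x}_1$ and $\mathsf{x}_2\mathsf{x}_3\mathsf{x}_4$ vanishes. -/
/-!
`Q₄` only depends on the five points `0, x₁, x₂, x₃, x₄` of a field. For pairwise distinct
points the four shuffled copies of `Q₄` are twenty terms which, over the common denominator
`x₁x₂x₃x₄ ∏ (xᵢ - xⱼ)`, cancel as polynomials. The generic variables are such points, since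
`n ↦ xₙ` is injective and `x₀ = 0`.
-/

open Finset

/-- The field of rational functions in countably many variables `x₁, x₂, …` over `ℚ`. -/
abbrev K : Type := FractionRing (MvPolynomial ℕ ℚ)

/-- The generic variables: `xg n` is the variable `x_n` in `K`, with the convention
`x₀ = 0`. -/
noncomputable def xg : ℕ → K := fun n =>
  if n = 0 then 0 else algebraMap (MvPolynomial ℕ ℚ) K (MvPolynomial.X n)

/-- `Q₄(x₁,x₂,x₃,x₄) = ∑_{i ∈ ℤ/5} 1/((x_{i+1}-x_i)(x_{i+3}-x_i)(x_{i+3}-x_{i+2})(x_{i+4}-x_i))`,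
indices mod 5, with `x₀ = 0`. -/
noncomputable def Q4 (x : ℕ → K) : K :=
  let y : ℕ → K := fun j => if j % 5 = 0 then 0 else x (j % 5)
  ∑ i ∈ Finset.range 5,
    ((y (i + 1) - y i) * (y (i + 3) - y i) * (y (i + 3) - y (i + 2)) * (y (i + 4) - y i))⁻¹

/-- Apply a depth-4 function to the variables `x_{n₁}, x_{n₂}, x_{n₃}, x_{n₄}`. -/
noncomputable def Q4at (n : Fin 4 → ℕ) : K :=
  Q4 (fun j => if h : 1 ≤ j ∧ j ≤ 4 then xg (n ⟨j - 1, by omega⟩) else 0)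

section FiveCycle

variable {F : Type*} [Field F]

def cyclicTerm (y₀ y₁ y₂ y₃ y₄ : F) : F :=
  ((y₁ - y₀) * (y₃ - y₀) * (y₃ - y₂) * (y₄ - y₀))⁻¹

-- `Q₄(a, b, c, d)`: `cyclicTerm` summed over the rotations of `(y₀, …, y₄) = (0, a, b, c, d)`.
def q4 (a b c d : F) : F :=
  cyclicTerm 0 a b c d + cyclicTerm a b c d 0 + cyclicTerm b c d 0 a + cyclicTerm c d 0 a b +
    cyclicTerm d 0 a b c

theorem q4_shuffle {a b c d : F} (ha : a ≠ 0) (hb : b ≠ 0) (hc : c ≠ 0) (hd : d ≠ 0)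
    (hab : a ≠ b) (hac : a ≠ c) (had : a ≠ d) (hbc : b ≠ c) (hbd : b ≠ d) (hcd : c ≠ d) :
    q4 a b c d + q4 b a c d + q4 b c a d + q4 b c d a = 0 := by
  simp only [q4, cyclicTerm, zero_sub, sub_zero]
  field_simp [sub_ne_zero, hab.symm, hac.symm, had.symm, hbc.symm, hbd.symm, hcd.symm]
  ring

end FiveCycle

theorem xg_injective : Function.Injective xg := by
  have hmap := IsFractionRing.injective (MvPolynomial ℕ ℚ) K
  intro i j h
  unfold xg at h
  split_ifs at h with hi hj hj
  · rw [hi, hj]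
  · exact absurd ((map_eq_zero_iff _ hmap).mp h.symm) (MvPolynomial.X_ne_zero j)
  · exact absurd ((map_eq_zero_iff _ hmap).mp h) (MvPolynomial.X_ne_zero i)
  · exact MvPolynomial.X_injective (hmap h)

theorem xg_ne_zero {n : ℕ} (hn : n ≠ 0) : xg n ≠ 0 := by
  simpa [xg] using hn

theorem Q4at_eq_q4 (n : Fin 4 → ℕ) :
    Q4at n = q4 (xg (n 0)) (xg (n 1)) (xg (n 2)) (xg (n 3)) := by
  simp [Q4at, Q4, q4, cyclicTerm, Finset.sum_range_succ]

/-- `Q₄` satisfies the depth-4 linearized shuffle equation in the first slot: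
`Q₄(x₁,x₂,x₃,x₄) + Q₄(x₂,x₁,x₃,x₄) + Q₄(x₂,x₃,x₁,x₄) + Q₄(x₂,x₃,x₄,x₁) = 0`,
i.e. the sum of `Q₄` over the four shuffles of `𝗑₁` and `𝗑₂𝗑₃𝗑₄` vanishes. -/
theorem Q4_linearized_shuffle :
    Q4at ![1, 2, 3, 4] + Q4at ![2, 1, 3, 4] + Q4at ![2, 3, 1, 4] + Q4at ![2, 3, 4, 1] = 0 := by
  simp only [Q4at_eq_q4, Matrix.cons_val]
  exact q4_shuffle (xg_ne_zero one_ne_zero) (xg_ne_zero two_ne_zero) (xg_ne_zero three_ne_zero)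
    (xg_ne_zero four_ne_zero) (xg_injective.ne (by decide)) (xg_injective.ne (by decide))
    (xg_injective.ne (by decide)) (xg_injective.ne (by decide)) (xg_injective.ne (by decide))
    (xg_injective.ne (by decide))
end
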